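/- Let n ∈ ℤ, n ≥ 3, and ε, b > 0, with χₙ(x;ε,b) = xⁿχ(x;ε,b). Then there exists c = c(n,ε,b) such that (χₙ'''(x;ε,b))²/χₙ'(x;ε,b) ≤ c·χₙ₋₁(x; ε/3, b+ε) for all x > ε. -/

import Mathlib

/-!
For `x > ε` the cutoff is `χ(x; ε, b) = S(min ((x - ε) / b) 1)` with `S` the polynomial
`2772 ∫₀ᵗ y⁵(1-y)⁵ dy`. Since `S'`, `S''` and `S'''` vanish at `1`, the clamped function can be
differentiated three times by the chain rule, and Leibniz's rule gives `χₙ'` and `χₙ'''`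
in terms of `s = min ((x - ε) / b) 1 ∈ (0, 1]`. Now `S(s) ≥ s⁶` (Bernstein form), `S' ≥ 0` and
`|S⁽ᵏ⁾(s)| = O(s³)`, so `χₙ' ≥ n xⁿ⁻¹ s⁶` while `|χₙ'''| ≤ A xⁿ⁻³ s³`: the extra powers of `x`
in front of `S⁽ᵏ⁾`, `k ≥ 1`, are bounded by `(b + ε)ᵏ` because `S⁽ᵏ⁾(s) = 0` beyond the
transition region. Hence `(χₙ''')² / χₙ' ≤ A² x²ⁿ⁻⁶ / (n xⁿ⁻¹) ≤ A² xⁿ⁻¹ / (n ε⁴)`, and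
`χ(x; ε/3, b + ε)` is bounded below by a positive constant for `x > ε`.
-/
open MeasureTheory intervalIntegral Set

noncomputable def smoothstep (t : ℝ) : ℝ :=
  462 * t ^ 6 - 1980 * t ^ 7 + 3465 * t ^ 8 - 3080 * t ^ 9 + 1386 * t ^ 10 - 252 * t ^ 11
noncomputable def smoothstep₁ (t : ℝ) : ℝ := 2772 * t ^ 5 * (1 - t) ^ 5
noncomputable def smoothstep₂ (t : ℝ) : ℝ := 13860 * t ^ 4 * (1 - t) ^ 4 * (1 - 2 * t)
noncomputable def smoothstep₃ (t : ℝ) : ℝ :=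
  13860 * t ^ 3 * (1 - t) ^ 3 * (4 * (1 - 2 * t) ^ 2 - 2 * t * (1 - t))

theorem hasDerivAt_smoothstep (t : ℝ) : HasDerivAt smoothstep (smoothstep₁ t) t := by
  have h : ∀ k : ℕ, ∀ c : ℝ, HasDerivAt (fun t : ℝ => c * t ^ k) (c * k * t ^ (k - 1)) t :=
    fun k c => ((hasDerivAt_pow k t).const_mul c).congr_deriv (by ring)
  exact ((((((h 6 462).sub (h 7 1980)).add (h 8 3465)).sub (h 9 3080)).add (h 10 1386)).sub
    (h 11 252)).congr_deriv
    (by simp only [Nat.cast_ofNat, Nat.add_one_sub_one, smoothstep₁]; ring)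

theorem hasDerivAt_smoothstep₁ (t : ℝ) : HasDerivAt smoothstep₁ (smoothstep₂ t) t :=
  (((hasDerivAt_pow 5 t).const_mul 2772).mul (((hasDerivAt_id' t).const_sub 1).pow 5)).congr_deriv
    (by simp only [Nat.cast_ofNat, Nat.add_one_sub_one, Pi.pow_apply, smoothstep₂]; ring)

theorem hasDerivAt_smoothstep₂ (t : ℝ) : HasDerivAt smoothstep₂ (smoothstep₃ t) t :=
  ((((hasDerivAt_pow 4 t).const_mul 13860).mul (((hasDerivAt_id' t).const_sub 1).pow 4)).mul
    (((hasDerivAt_id' t).const_mul 2).const_sub 1)).congr_deriv (by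
      simp only [Nat.cast_ofNat, Nat.add_one_sub_one, Pi.pow_apply, Pi.mul_apply, smoothstep₃]
      ring)

theorem smoothstep_eq_integral (x : ℝ) :
    smoothstep x = 2772 * ∫ y in (0 : ℝ)..x, y ^ 5 * (1 - y) ^ 5 := by
  have hcont : Continuous smoothstep₁ := by unfold smoothstep₁; fun_prop
  have hintegrand : (fun y : ℝ => 2772 * (y ^ 5 * (1 - y) ^ 5)) = smoothstep₁ := by
    funext y; unfold smoothstep₁; ring
  rw [← intervalIntegral.integral_const_mul, hintegrand, integral_eq_sub_of_hasDerivAt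
    (fun y _ => hasDerivAt_smoothstep y) (hcont.intervalIntegrable 0 x)]
  simp [smoothstep]

theorem smoothstep_one : smoothstep 1 = 1 := by norm_num [smoothstep]

theorem smoothstep₁_one : smoothstep₁ 1 = 0 := by norm_num [smoothstep₁]

theorem smoothstep₂_one : smoothstep₂ 1 = 0 := by norm_num [smoothstep₂]

theorem smoothstep₃_one : smoothstep₃ 1 = 0 := by norm_num [smoothstep₃]

theorem smoothstep₁_nonneg {t : ℝ} (ht : t ∈ Icc (0 : ℝ) 1) : 0 ≤ smoothstep₁ t := by
  have h₀ := ht.1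
  have h₁ := sub_nonneg.2 ht.2
  unfold smoothstep₁
  positivity

theorem pow_six_le_smoothstep {t : ℝ} (ht : t ∈ Icc (0 : ℝ) 1) : t ^ 6 ≤ smoothstep t := by
  have h₀ := ht.1
  have h₁ := sub_nonneg.2 ht.2
  have : smoothstep t - t ^ 6 = t ^ 6 * (461 * (1 - t) ^ 5 + 325 * t * (1 - t) ^ 4
      + 155 * t ^ 2 * (1 - t) ^ 3 + 45 * t ^ 3 * (1 - t) ^ 2 + 6 * t ^ 4 * (1 - t)) := by
    unfold smoothstep; ring
  linarith [show 0 ≤ smoothstep t - t ^ 6 by rw [this]; positivity]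

theorem exists_abs_le_mul_pow_of_eq_pow_mul {g R : ℝ → ℝ} {m : ℕ} (hR : Continuous R)
    (hg : ∀ t, g t = t ^ m * R t) : ∃ C, ∀ t ∈ Icc (0 : ℝ) 1, |g t| ≤ C * t ^ m := by
  obtain ⟨C, hC⟩ := isCompact_Icc.exists_bound_of_continuousOn hR.continuousOn
  refine ⟨C, fun t ht => ?_⟩
  rw [hg, abs_mul, abs_of_nonneg (pow_nonneg ht.1 m), mul_comm]
  exact mul_le_mul_of_nonneg_right (hC t ht) (pow_nonneg ht.1 m)

theorem exists_abs_smoothstep_le : ∃ C, ∀ t ∈ Icc (0 : ℝ) 1,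
    |smoothstep t| ≤ C * t ^ 3 ∧ |smoothstep₁ t| ≤ C * t ^ 3 ∧
      |smoothstep₂ t| ≤ C * t ^ 3 ∧ |smoothstep₃ t| ≤ C * t ^ 3 := by
  obtain ⟨C₀, h₀⟩ := exists_abs_le_mul_pow_of_eq_pow_mul (g := smoothstep) (m := 3)
    (R := fun t => t ^ 3 * (462 - 1980 * t + 3465 * t ^ 2 - 3080 * t ^ 3 + 1386 * t ^ 4
      - 252 * t ^ 5)) (by fun_prop) (fun t => by unfold smoothstep; ring)
  obtain ⟨C₁, h₁⟩ := exists_abs_le_mul_pow_of_eq_pow_mul (g := smoothstep₁) (m := 3)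
    (R := fun t => 2772 * t ^ 2 * (1 - t) ^ 5) (by fun_prop) (fun t => by unfold smoothstep₁; ring)
  obtain ⟨C₂, h₂⟩ := exists_abs_le_mul_pow_of_eq_pow_mul (g := smoothstep₂) (m := 3)
    (R := fun t => 13860 * t * (1 - t) ^ 4 * (1 - 2 * t)) (by fun_prop)
    (fun t => by unfold smoothstep₂; ring)
  obtain ⟨C₃, h₃⟩ := exists_abs_le_mul_pow_of_eq_pow_mul (g := smoothstep₃) (m := 3)
    (R := fun t => 13860 * (1 - t) ^ 3 * (4 * (1 - 2 * t) ^ 2 - 2 * t * (1 - t))) (by fun_prop)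
    (fun t => by unfold smoothstep₃; ring)
  refine ⟨max (max C₀ C₁) (max C₂ C₃), fun t ht => ?_⟩
  have hC {C : ℝ} (hC : C ≤ max (max C₀ C₁) (max C₂ C₃)) :
      C * t ^ 3 ≤ max (max C₀ C₁) (max C₂ C₃) * t ^ 3 :=
    mul_le_mul_of_nonneg_right hC (pow_nonneg ht.1 3)
  exact ⟨(h₀ t ht).trans (hC (by simp)), (h₁ t ht).trans (hC (by simp)),
    (h₂ t ht).trans (hC (by simp)), (h₃ t ht).trans (hC (by simp))⟩

theorem hasDerivAt_comp_min_one {P Q : ℝ → ℝ} (hP : ∀ t, HasDerivAt P (Q t) t) (hQ : Q 1 = 0)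
    (t : ℝ) : HasDerivAt (fun t => P (min t 1)) (Q (min t 1)) t := by
  rcases lt_trichotomy t 1 with ht | rfl | ht
  · rw [min_eq_left ht.le]
    refine (hP t).congr_of_eventuallyEq ?_
    filter_upwards [Iio_mem_nhds ht] with y hy using by rw [min_eq_left (le_of_lt hy)]
  · have hleft : HasDerivWithinAt (fun t => P (min t 1)) (Q 1) (Iic 1) 1 :=
      (hP 1).hasDerivWithinAt.congr (fun y hy => by rw [min_eq_left hy]) (by simp)
    have hright : HasDerivWithinAt (fun t => P (min t 1)) (Q 1) (Ici 1) 1 := by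
      rw [hQ]
      exact (hasDerivWithinAt_const 1 _ (P 1)).congr (fun y hy => by rw [min_eq_right hy])
        (by simp)
    simpa [Iic_union_Ici] using hleft.union hright
  · rw [min_eq_right ht.le, hQ]
    refine (hasDerivAt_const t (P 1)).congr_of_eventuallyEq ?_
    filter_upwards [Ioi_mem_nhds ht] with y hy using by rw [min_eq_right (le_of_lt hy)]

theorem hasDerivAt_comp_min_one_div_pow {P Q : ℝ → ℝ} (hP : ∀ t, HasDerivAt P (Q t) t)
    (hQ : Q 1 = 0) (α : ℝ) {β : ℝ} (hβ : β ≠ 0) (k : ℕ) (x : ℝ) :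
    HasDerivAt (fun x => P (min ((x - α) / β) 1) / β ^ k)
      (Q (min ((x - α) / β) 1) / β ^ (k + 1)) x := by
  have := ((hasDerivAt_comp_min_one hP hQ ((x - α) / β)).comp x
    (((hasDerivAt_id x).sub_const α).div_const β)).div_const (β ^ k)
  exact this.congr_deriv (by field_simp; ring)

theorem hasDerivAt_descFactorial_mul_pow {𝕜 : Type*} [NontriviallyNormedField 𝕜] (n k : ℕ) (x : 𝕜) :
    HasDerivAt (fun x => (n.descFactorial k : 𝕜) * x ^ (n - k))
      ((n.descFactorial (k + 1) : 𝕜) * x ^ (n - (k + 1))) x :=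
  ((hasDerivAt_pow (n - k) x).const_mul _).congr_deriv (by
    rw [Nat.descFactorial_succ, Nat.sub_sub]; push_cast; ring)

theorem iteratedDeriv_three_mul {𝕜 : Type*} [NontriviallyNormedField 𝕜]
    {u₀ u₁ u₂ u₃ v₀ v₁ v₂ v₃ : 𝕜 → 𝕜}
    (hu₀ : ∀ x, HasDerivAt u₀ (u₁ x) x) (hu₁ : ∀ x, HasDerivAt u₁ (u₂ x) x)
    (hu₂ : ∀ x, HasDerivAt u₂ (u₃ x) x) (hv₀ : ∀ x, HasDerivAt v₀ (v₁ x) x)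
    (hv₁ : ∀ x, HasDerivAt v₁ (v₂ x) x) (hv₂ : ∀ x, HasDerivAt v₂ (v₃ x) x) (x : 𝕜) :
    iteratedDeriv 3 (fun x => u₀ x * v₀ x) x
      = u₃ x * v₀ x + 3 * (u₂ x * v₁ x) + 3 * (u₁ x * v₂ x) + u₀ x * v₃ x := by
  have h₁ : deriv (fun x => u₀ x * v₀ x) = fun x => u₁ x * v₀ x + u₀ x * v₁ x :=
    funext fun x => ((hu₀ x).mul (hv₀ x)).deriv
  have h₂ : deriv (fun x => u₁ x * v₀ x + u₀ x * v₁ x)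
      = fun x => u₂ x * v₀ x + 2 * (u₁ x * v₁ x) + u₀ x * v₂ x :=
    funext fun x => (((hu₁ x).mul (hv₀ x)).add ((hu₀ x).mul (hv₁ x))).deriv.trans (by ring)
  have h₃ := (((hu₂ x).mul (hv₀ x)).add (((hu₁ x).mul (hv₁ x)).const_mul 2)).add
    ((hu₀ x).mul (hv₂ x))
  rw [iteratedDeriv_eq_iterate]
  simp only [Function.iterate_succ, Function.iterate_zero, Function.comp_apply, id, h₁, h₂]
  exact h₃.deriv.trans (by ring)

theorem ite_cutoff_eq_smoothstep_min {α β x : ℝ} (hβ : 0 < β) (hx : α < x) :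
    (if x ≤ α then 0 else if x < β + α then smoothstep ((x - α) / β) else 1)
      = smoothstep (min ((x - α) / β) 1) := by
  rw [if_neg hx.not_ge]
  split_ifs with h
  · rw [min_eq_left ((div_le_one hβ).2 (by linarith))]
  · rw [min_eq_right ((one_le_div hβ).2 (by linarith)), smoothstep_one]

theorem min_div_one_mem_Icc {α β x : ℝ} (hβ : 0 < β) (hx : α ≤ x) :
    min ((x - α) / β) 1 ∈ Icc (0 : ℝ) 1 :=
  ⟨le_min (div_nonneg (sub_nonneg.2 hx) hβ.le) zero_le_one, min_le_right _ _⟩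

theorem pow_six_le_smoothstep_min_div {α β γ x : ℝ} (hβ : 0 < β) (hαγ : α ≤ γ) (hγx : γ ≤ x) :
    min ((γ - α) / β) 1 ^ 6 ≤ smoothstep (min ((x - α) / β) 1) := by
  refine le_trans ?_ (pow_six_le_smoothstep (min_div_one_mem_Icc hβ (hαγ.trans hγx)))
  gcongr

-- Equals `xⁿ χ(x; α, β)` only for `x > α`; on `x ≤ α` the clamp from below is missing.
noncomputable def powCutoff (n : ℕ) (α β x : ℝ) : ℝ := x ^ n * smoothstep (min ((x - α) / β) 1)

section powCutoff

variable {n : ℕ} {α β : ℝ}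

theorem deriv_powCutoff (hβ : β ≠ 0) (x : ℝ) :
    deriv (powCutoff n α β) x = n * x ^ (n - 1) * smoothstep (min ((x - α) / β) 1)
      + x ^ n * (smoothstep₁ (min ((x - α) / β) 1) / β) := by
  have hF : powCutoff n α β = fun x => x ^ n * (smoothstep (min ((x - α) / β) 1) / β ^ 0) := by
    funext x; simp [powCutoff]
  rw [hF]
  exact ((hasDerivAt_pow n x).mul
    (hasDerivAt_comp_min_one_div_pow hasDerivAt_smoothstep smoothstep₁_one α hβ 0 x)).deriv.trans
    (by simp)

theorem iteratedDeriv_three_powCutoff (hβ : β ≠ 0) (x : ℝ) :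
    iteratedDeriv 3 (powCutoff n α β) x
      = n.descFactorial 3 * x ^ (n - 3) * smoothstep (min ((x - α) / β) 1)
        + 3 * (n.descFactorial 2 * x ^ (n - 2) * (smoothstep₁ (min ((x - α) / β) 1) / β))
        + 3 * (n * x ^ (n - 1) * (smoothstep₂ (min ((x - α) / β) 1) / β ^ 2))
        + x ^ n * (smoothstep₃ (min ((x - α) / β) 1) / β ^ 3) := by
  have hF : powCutoff n α β = fun x => ((n.descFactorial 0 : ℕ) : ℝ) * x ^ (n - 0)
      * (smoothstep (min ((x - α) / β) 1) / β ^ 0) := by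
    funext x; simp [powCutoff]
  rw [hF, iteratedDeriv_three_mul (hasDerivAt_descFactorial_mul_pow n 0)
    (hasDerivAt_descFactorial_mul_pow n 1) (hasDerivAt_descFactorial_mul_pow n 2)
    (hasDerivAt_comp_min_one_div_pow hasDerivAt_smoothstep smoothstep₁_one α hβ 0)
    (hasDerivAt_comp_min_one_div_pow hasDerivAt_smoothstep₁ smoothstep₂_one α hβ 1)
    (hasDerivAt_comp_min_one_div_pow hasDerivAt_smoothstep₂ smoothstep₃_one α hβ 2)]
  simp

theorem mul_pow_six_le_deriv_powCutoff (hα : 0 ≤ α) (hβ : 0 < β) {x : ℝ} (hx : α < x) :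
    n * x ^ (n - 1) * min ((x - α) / β) 1 ^ 6 ≤ deriv (powCutoff n α β) x := by
  have hs := min_div_one_mem_Icc hβ hx.le
  have hx₀ : 0 ≤ x := hα.trans hx.le
  have h₀ := mul_le_mul_of_nonneg_left (pow_six_le_smoothstep hs)
    (by positivity : (0 : ℝ) ≤ n * x ^ (n - 1))
  have h₁ : 0 ≤ x ^ n * (smoothstep₁ (min ((x - α) / β) 1) / β) := by
    have := smoothstep₁_nonneg hs
    positivity
  rw [deriv_powCutoff hβ.ne']
  linarith

theorem abs_pow_mul_comp_min_one_le {P : ℝ → ℝ} {C : ℝ}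
    (hP : ∀ t ∈ Icc (0 : ℝ) 1, |P t| ≤ C * t ^ 3) (hP₁ : P 1 = 0)
    (hα : 0 ≤ α) (hβ : 0 < β) {x : ℝ} (hx : α < x) (k : ℕ) :
    |x ^ k * P (min ((x - α) / β) 1)| ≤ (β + α) ^ k * (C * min ((x - α) / β) 1 ^ 3) := by
  have hs := min_div_one_mem_Icc hβ hx.le
  rcases le_total ((x - α) / β) 1 with h | h
  · rw [abs_mul, abs_of_nonneg (pow_nonneg (hα.trans hx.le) k)]
    have hxβα : x ≤ β + α := by rw [div_le_one hβ] at h; linarith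
    exact mul_le_mul (pow_le_pow_left₀ (hα.trans hx.le) hxβα k) (hP _ hs) (abs_nonneg _)
      (by positivity)
  · have hC : 0 ≤ C := by simpa using (abs_nonneg _).trans (hP 1 (by simp))
    rw [min_eq_right h, hP₁, mul_zero, abs_zero]
    positivity

theorem exists_abs_iteratedDeriv_three_powCutoff_le (hn : 3 ≤ n) (hα : 0 ≤ α) (hβ : 0 < β) :
    ∃ A, ∀ x, α < x →
      |iteratedDeriv 3 (powCutoff n α β) x| ≤ A * x ^ (n - 3) * min ((x - α) / β) 1 ^ 3 := by
  obtain ⟨C, hC⟩ := exists_abs_smoothstep_le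
  obtain ⟨m, rfl⟩ : ∃ m, n = m + 3 := ⟨n - 3, by omega⟩
  set d₃ : ℝ := ↑((m + 3).descFactorial 3)
  set d₂ : ℝ := ↑((m + 3).descFactorial 2)
  set p := β + α
  refine ⟨C * (d₃ + 3 * d₂ / β * p + 3 * (m + 3) / β ^ 2 * p ^ 2 + 1 / β ^ 3 * p ^ 3),
    fun x hx => ?_⟩
  set s := min ((x - α) / β) 1
  have hs : s ∈ Icc (0 : ℝ) 1 := min_div_one_mem_Icc hβ hx.le
  have hx₀ : 0 ≤ x := hα.trans hx.le
  have hterm {c T B : ℝ} (hc : 0 ≤ c) (hT : |T| ≤ B) : |c * T| ≤ c * B := by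
    rw [abs_mul, abs_of_nonneg hc]
    exact mul_le_mul_of_nonneg_left hT hc
  have h₀ := hterm (by positivity : 0 ≤ d₃) (hC s hs).1
  have h₁ := hterm (by positivity : 0 ≤ 3 * d₂ / β)
    (abs_pow_mul_comp_min_one_le (fun t ht => (hC t ht).2.1) smoothstep₁_one hα hβ hx 1)
  have h₂ := hterm (by positivity : 0 ≤ 3 * (m + 3 : ℝ) / β ^ 2)
    (abs_pow_mul_comp_min_one_le (fun t ht => (hC t ht).2.2.1) smoothstep₂_one hα hβ hx 2)
  have h₃ := hterm (by positivity : 0 ≤ 1 / β ^ 3)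
    (abs_pow_mul_comp_min_one_le (fun t ht => (hC t ht).2.2.2) smoothstep₃_one hα hβ hx 3)
  have hfactor : iteratedDeriv 3 (powCutoff (m + 3) α β) x = x ^ m * (d₃ * smoothstep s
      + 3 * d₂ / β * (x ^ 1 * smoothstep₁ s) + 3 * (m + 3) / β ^ 2 * (x ^ 2 * smoothstep₂ s)
      + 1 / β ^ 3 * (x ^ 3 * smoothstep₃ s)) := by
    rw [iteratedDeriv_three_powCutoff hβ.ne', show m + 3 - 2 = m + 1 by omega,
      show m + 3 - 1 = m + 2 by omega, Nat.add_sub_cancel]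
    push_cast
    field_simp
    ring
  rw [hfactor, abs_mul, abs_of_nonneg (pow_nonneg hx₀ m), Nat.add_sub_cancel]
  calc x ^ m * |_| ≤ x ^ m * ((d₃ + 3 * d₂ / β * p + 3 * (m + 3) / β ^ 2 * p ^ 2
        + 1 / β ^ 3 * p ^ 3) * (C * s ^ 3)) := by
        gcongr
        linarith [abs_add_le (d₃ * smoothstep s) (3 * d₂ / β * (x ^ 1 * smoothstep₁ s)),
          abs_add_le (d₃ * smoothstep s + 3 * d₂ / β * (x ^ 1 * smoothstep₁ s))
            (3 * (m + 3) / β ^ 2 * (x ^ 2 * smoothstep₂ s)),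
          abs_add_le (d₃ * smoothstep s + 3 * d₂ / β * (x ^ 1 * smoothstep₁ s)
            + 3 * (m + 3) / β ^ 2 * (x ^ 2 * smoothstep₂ s)) (1 / β ^ 3 * (x ^ 3 * smoothstep₃ s))]
    _ = _ := by ring

theorem exists_sq_iteratedDeriv_three_div_deriv_powCutoff_le (hn : 3 ≤ n) (hα : 0 < α)
    (hβ : 0 < β) : ∃ c, 0 ≤ c ∧ ∀ x, α < x →
      iteratedDeriv 3 (powCutoff n α β) x ^ 2 / deriv (powCutoff n α β) x ≤ c * x ^ (n - 1) := by
  obtain ⟨A, hA⟩ := exists_abs_iteratedDeriv_three_powCutoff_le hn hα.le hβ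
  obtain ⟨m, rfl⟩ : ∃ m, n = m + 3 := ⟨n - 3, by omega⟩
  refine ⟨A ^ 2 / ((m + 3) * α ^ 4), by positivity, fun x hx => ?_⟩
  set s := min ((x - α) / β) 1
  have hs : 0 < s := lt_min (div_pos (sub_pos.2 hx) hβ) one_pos
  have hx₀ : 0 < x := hα.trans hx
  have hderiv := mul_pow_six_le_deriv_powCutoff (n := m + 3) hα.le hβ hx
  push_cast at hderiv
  rw [div_le_iff₀ (lt_of_lt_of_le (by positivity) hderiv), show m + 3 - 1 = m + 2 by omega]
  rw [Nat.add_sub_cancel] at hA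
  calc iteratedDeriv 3 (powCutoff (m + 3) α β) x ^ 2
      ≤ (A * x ^ m * s ^ 3) ^ 2 := sq_le_sq' (abs_le.1 (hA x hx)).1 (abs_le.1 (hA x hx)).2
    _ = A ^ 2 / ((m + 3) * α ^ 4) * x ^ (m + 2) * ((m + 3) * x ^ (m + 2) * s ^ 6)
          * (α ^ 4 / x ^ 4) := by
        field_simp
        ring
    _ ≤ A ^ 2 / ((m + 3) * α ^ 4) * x ^ (m + 2) * ((m + 3) * x ^ (m + 2) * s ^ 6) := by
        refine mul_le_of_le_one_right (by positivity) ((div_le_one (by positivity)).2 ?_)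
        exact pow_le_pow_left₀ hα.le hx.le 4
    _ ≤ _ := by gcongr

end powCutoff

theorem stmt_11 (n : ℕ) (hn : 3 ≤ n) (ε b : ℝ) (hε : 0 < ε) (hb : 0 < b)
    (ρ : ℝ → ℝ) (χ : ℝ → ℝ → ℝ → ℝ) (χm : ℕ → ℝ → ℝ → ℝ → ℝ)
    (hρ : ∀ x : ℝ, ρ x = 2772 * ∫ y in (0:ℝ)..x, y ^ 5 * (1 - y) ^ 5)
    (hχ : ∀ α β x : ℝ, 0 < α → 0 < β → χ α β x =
      if x ≤ α then 0 else if x < β + α then ρ ((x - α) / β) else 1)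
    (hχm : ∀ (m : ℕ) (α β x : ℝ), χm m α β x = x ^ m * χ α β x) :
    ∃ c : ℝ, ∀ x : ℝ, ε < x →
      (iteratedDeriv 3 (χm n ε b) x) ^ 2 / deriv (χm n ε b) x
        ≤ c * χm (n - 1) (ε / 3) (b + ε) x := by
  obtain rfl : ρ = smoothstep := funext fun x => (hρ x).trans (smoothstep_eq_integral x).symm
  have hcutoff {α β x : ℝ} (hα : 0 < α) (hβ : 0 < β) (hx : α < x) :
      χ α β x = smoothstep (min ((x - α) / β) 1) :=
    (hχ α β x hα hβ).trans (ite_cutoff_eq_smoothstep_min hβ hx)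
  have hEqOn : EqOn (χm n ε b) (powCutoff n ε b) (Ioi ε) := fun x hx => by
    rw [hχm, hcutoff hε hb hx, powCutoff]
  obtain ⟨c, hc₀, hc⟩ := exists_sq_iteratedDeriv_three_div_deriv_powCutoff_le hn hε hb
  set m₀ := min ((ε - ε / 3) / (b + ε)) 1 ^ 6
  have hm₀ : 0 < m₀ := pow_pos (lt_min (by apply div_pos <;> linarith) one_pos) 6
  refine ⟨c / m₀, fun x hx => ?_⟩
  rw [hEqOn.iteratedDeriv_of_isOpen isOpen_Ioi 3 hx, hEqOn.deriv isOpen_Ioi hx, hχm,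
    hcutoff (x := x) (by positivity) (by positivity) (by linarith)]
  calc _ ≤ c * x ^ (n - 1) := hc x hx
    _ = c / m₀ * (x ^ (n - 1) * m₀) := by field_simp
    _ ≤ _ := by
        have := pow_six_le_smoothstep_min_div (by positivity : 0 < b + ε)
          (by linarith : ε / 3 ≤ ε) hx.le
        have hx₀ : 0 < x := hε.trans hx
        gcongr
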